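/- Let ϑ = (ϑ_1, ϑ_2, …) be an infinite sequence of non-negative reals with ϑ_j ≥ ϑ_{j+1} for all j ≥ 1. Then ϑ ∈ 𝒮 if and only if 1/2 ≤ ϑ_1 ≤ 1 and there exists a (finite or infinite) strictly increasing sequence of non-negative integers 0 = k_1 < k_2 < k_3 < ⋯, with exactly as many terms as ϑ has nonzero entries, such that ϑ_j = ϑ_1 · 2^{−k_j} for every j with ϑ_j > 0, ϑ_j = 0 for every j beyond the length of the sequence (k_j), and 1/ϑ_1 = Σ_j 2^{−k_j} (a finite- or infinite-length binary expansion of 1/ϑ_1). -/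

import Mathlib

open Filter Topology

noncomputable section

namespace GreedyEnergy

/-- Decreasing list `n₁ > n₂ > ⋯ > n_p` of the binary exponents of `N`,
so that `N = 2^{n₁} + ⋯ + 2^{n_p}` with `n₁ > n₂ > ⋯ > n_p ≥ 0`. -/
def binExps (N : ℕ) : List ℕ :=
  ((List.range (N + 1)).filter fun i => N.testBit i).reverse

/-- The number `p = τ_b(N)` of ones in the binary expansion of `N`. -/
def pbin (N : ℕ) : ℕ := (binExps N).length

/-- `η(N)` viewed as an infinite sequence (0-indexed): the entry of index `k`
is `θ_{k+1} = 2^{n_{k+1}}/N` for `k < p`, and `0` for `k ≥ p`. -/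
def eta (N : ℕ) : ℕ → ℝ :=
  fun k => ((binExps N).map fun n => (2 : ℝ) ^ n / (N : ℝ)).getD k 0

/-- `H(θ; s)` for a finite vector of length `p` given (0-indexed) by `θ : ℕ → ℝ`:
`H(θ;s) = Σ_{k=1}^p θ_k^{s+1} + 2(2^s − 1) Σ_{k=1}^{p−1} θ_k^s Σ_{j=k+1}^p θ_j`. -/
def Hvec (θ : ℕ → ℝ) (p : ℕ) (s : ℝ) : ℝ :=
  (∑ k ∈ Finset.range p, θ k ^ (s + 1)) +
    2 * ((2 : ℝ) ^ s - 1) *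
      ∑ k ∈ Finset.range p, θ k ^ s * ∑ j ∈ Finset.Ico (k + 1) p, θ j

/-- `K(θ) = 2 log 2 + Σ_{k=1}^p θ_k² log(θ_k/4) + 2 Σ_{k=1}^{p−1} (Σ_{j=k+1}^p θ_j) θ_k log θ_k`. -/
def Kvec (θ : ℕ → ℝ) (p : ℕ) : ℝ :=
  2 * Real.log 2 + (∑ k ∈ Finset.range p, θ k ^ 2 * Real.log (θ k / 4)) +
    2 * ∑ k ∈ Finset.range p, (∑ j ∈ Finset.Ico (k + 1) p, θ j) * (θ k * Real.log (θ k))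

/-- `R(θ) = −(2 log 2) Σ_{k=1}^p (k−1) θ_k − Σ_{k=1}^p θ_k log θ_k` (0-indexed: `k−1 ↦ k`). -/
def Rvec (θ : ℕ → ℝ) (p : ℕ) : ℝ :=
  -(2 * Real.log 2) * (∑ k ∈ Finset.range p, (k : ℝ) * θ k) -
    ∑ k ∈ Finset.range p, θ k * Real.log (θ k)

/-- `G(θ; s) = Σ_{k=1}^p θ_k^s`. -/
def Gvec (θ : ℕ → ℝ) (p : ℕ) (s : ℝ) : ℝ := ∑ k ∈ Finset.range p, θ k ^ s

/-- `Λ(θ) = Σ_{k=1}^p θ_k log θ_k`. -/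
def Λvec (θ : ℕ → ℝ) (p : ℕ) : ℝ := ∑ k ∈ Finset.range p, θ k * Real.log (θ k)

/-- `H(η(N); s)`. -/
def Heta (N : ℕ) (s : ℝ) : ℝ := Hvec (eta N) (pbin N) s

/-- `K(η(N))`. -/
def Keta (N : ℕ) : ℝ := Kvec (eta N) (pbin N)

/-- `R(η(N))`. -/
def Reta (N : ℕ) : ℝ := Rvec (eta N) (pbin N)

/-- `G(η(N); s)`. -/
def Geta (N : ℕ) (s : ℝ) : ℝ := Gvec (eta N) (pbin N) s

/-- `Λ(η(N))`. -/
def Λeta (N : ℕ) : ℝ := Λvec (eta N) (pbin N)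

/-- The set `𝒮` of infinite sequences `ϑ` for which there is a strictly increasing
sequence of positive integers `N_m` with `ϑ_j = lim_m (η(N_m))_j` for every `j`. -/
def Sset : Set (ℕ → ℝ) :=
  {ϑ | ∃ Nm : ℕ → ℕ, StrictMono Nm ∧ (∀ m, 1 ≤ Nm m) ∧
        ∀ j, Tendsto (fun m => eta (Nm m) j) atTop (𝓝 (ϑ j))}

/-- `H(ϑ; s)` for an infinite sequence `ϑ` (0-indexed). The conventions
`ϑ_n log ϑ_n = 0` and `ϑ_n^s ϑ_j = 0` when `ϑ_n = 0` hold automatically,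
since `Real.log 0 = 0` and `(0:ℝ) ^ s = 0` for `s ≠ 0` (and the factor
`2^s − 1` vanishes when `s = 0`). -/
def Hinf (ϑ : ℕ → ℝ) (s : ℝ) : ℝ :=
  (∑' n : ℕ, ϑ n ^ (s + 1)) +
    2 * ((2 : ℝ) ^ s - 1) * ∑' n : ℕ, ϑ n ^ s * ∑' j : ℕ, ϑ (n + 1 + j)

/-- `K(ϑ)` for an infinite sequence `ϑ`. -/
def Kinf (ϑ : ℕ → ℝ) : ℝ :=
  2 * Real.log 2 + (∑' n : ℕ, ϑ n ^ 2 * Real.log (ϑ n / 4)) +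
    2 * ∑' n : ℕ, (∑' j : ℕ, ϑ (n + 1 + j)) * (ϑ n * Real.log (ϑ n))

/-- `R(ϑ)` for an infinite sequence `ϑ` (0-indexed: `n−1 ↦ n`). -/
def Rinf (ϑ : ℕ → ℝ) : ℝ :=
  -(2 * Real.log 2) * (∑' n : ℕ, (n : ℝ) * ϑ n) - ∑' n : ℕ, ϑ n * Real.log (ϑ n)

/-- The set of limit points of a real sequence: values of convergent subsequences. -/
def limitPoints (x : ℕ → ℝ) : Set ℝ :=
  {L | ∃ φ : ℕ → ℕ, StrictMono φ ∧ Tendsto (fun m => x (φ m)) atTop (𝓝 L)}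

/-- The Riesz `s`-kernel: `k_s(z,w) = |z−w|^{−s}` for `s ≠ 0`, `k_0(z,w) = −log|z−w|`. -/
def kernel (s : ℝ) (z w : ℂ) : ℝ :=
  if s = 0 then -Real.log ‖z - w‖ else ‖z - w‖ ^ (-s)

/-- The Riesz `s`-energy `E_s(a_0, …, a_{N−1}) = Σ_{i ≠ j} k_s(a_i, a_j)`. -/
def energy (s : ℝ) (a : ℕ → ℂ) (N : ℕ) : ℝ :=
  ∑ i ∈ Finset.range N, ∑ j ∈ Finset.range N,
    if i ≠ j then kernel s (a i) (a j) else 0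

/-- The potential `U_{N,s}(z) = Σ_{ℓ=0}^{N−1} k_s(z, a_ℓ)`. -/
def pot (s : ℝ) (a : ℕ → ℂ) (N : ℕ) (z : ℂ) : ℝ :=
  ∑ l ∈ Finset.range N, kernel s z (a l)

/-- A greedy `s`-energy sequence on the unit circle: all points lie on `S¹`, and for
every `N ≥ 1` the point `a_N` minimizes (if `s ≥ 0`) resp. maximizes (if `s < 0`)
the potential `U_{N,s}` over `S¹`. -/
def IsGreedy (s : ℝ) (a : ℕ → ℂ) : Prop :=
  (∀ n, ‖a n‖ = 1) ∧
    ∀ N, 1 ≤ N →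
      ((0 ≤ s → ∀ z : ℂ, ‖z‖ = 1 → pot s a N (a N) ≤ pot s a N z) ∧
        (s < 0 → ∀ z : ℂ, ‖z‖ = 1 → pot s a N z ≤ pot s a N (a N)))

/-- `I_s(σ) = 2^{−s} Γ((1−s)/2) / (√π Γ(1 − s/2))`. -/
def Isigma (s : ℝ) : ℝ :=
  (2 : ℝ) ^ (-s) / Real.sqrt Real.pi * (Real.Gamma ((1 - s) / 2) / Real.Gamma (1 - s / 2))

/-- The value `ζ(s)` of the Riemann zeta function at a real `s` (real part of the
analytically continued zeta function). -/
def zetaR (s : ℝ) : ℝ := (riemannZeta (s : ℂ)).re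

/-!
The entries of `η(N)` are nonnegative, sum to `1`, satisfy `θ_{j+1} ≤ θ_j / 2`, and every ratio
`θ_j / θ_1` lies in the closed set `{0} ∪ {2^{-t}}`. These properties pass to pointwise limits
(the sum by dominated convergence, with the bound `θ_j ≤ 2^{-j}`), and they force a limit `ϑ`
into the stated dyadic form.

Conversely, put `g_j = 2^{-k_j}` on the support of `ϑ` and `g_j = 0` off it. For a large exponent
`T_m`, the integer `N_m = Σ_{j ≤ m, ϑ_j > 0} 2^{T_m - k_j}` has exactly these binary digits, so
`η(N_m)_j = g_j / Σ_{i ≤ m} g_i` for `j ≤ m`, which tends to `ϑ_1 g_j = ϑ_j`.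
-/

open Finset

theorem _root_.List.hasSum_getD {α : Type*} [AddCommGroup α] [TopologicalSpace α]
    [IsTopologicalAddGroup α] (l : List α) : HasSum (fun j => l.getD j 0) l.sum := by
  induction l with
  | nil => simp [hasSum_zero]
  | cons a l ih => exact (hasSum_nat_add_iff' 1).1 (by simpa using ih)

theorem le_mul_half_pow_of_two_mul_succ_le {a : ℕ → ℝ} (h : ∀ j, 2 * a (j + 1) ≤ a j) :
    ∀ j, a j ≤ a 0 * (1 / 2) ^ j
  | 0 => by simp
  | j + 1 => by
    have := le_mul_half_pow_of_two_mul_succ_le h j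
    rw [pow_succ]
    linarith [h j]

theorem isClosed_insert_zero_range_half_pow :
    IsClosed (insert 0 (Set.range fun t : ℕ => (1 / 2 : ℝ) ^ t)) :=
  (tendsto_pow_atTop_nhds_zero_of_lt_one (by norm_num) (by norm_num)).isCompact_insert_range.isClosed

theorem binExps_eq_reverse_bitIndices (N : ℕ) : binExps N = N.bitIndices.reverse := by
  refine congrArg List.reverse <| (List.pairwise_lt_range.filter _).sortedLT.eq_of_mem_iff
    Nat.bitIndices_sorted fun i => ?_
  simp only [List.mem_filter, List.mem_range, Nat.mem_bitIndices, and_iff_right_iff_imp]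
  exact fun h => Nat.lt_succ_of_le (Nat.lt_two_pow_self.le.trans (Nat.ge_two_pow_of_testBit h))

theorem binExps_sortedGT (N : ℕ) : (binExps N).SortedGT := by
  rw [binExps_eq_reverse_bitIndices]
  exact Nat.bitIndices_sorted.reverse

theorem sum_map_two_pow_binExps (N : ℕ) : ((binExps N).map (2 ^ ·)).sum = N := by
  rw [binExps_eq_reverse_bitIndices, List.map_reverse, List.sum_reverse,
    Nat.sum_map_two_pow_bitIndices]

theorem binExps_sum_map_two_pow {L : List ℕ} (hL : L.SortedGT) :
    binExps (L.map (2 ^ ·)).sum = L := by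
  rw [binExps_eq_reverse_bitIndices, ← List.sum_reverse, ← List.map_reverse,
    Nat.bitIndices_sum_map_two_pow hL.reverse, List.reverse_reverse]

theorem binExps_sum_range_two_pow {c : ℕ} {e : ℕ → ℕ} (he : StrictAntiOn e (Set.Iio c)) :
    binExps (∑ i ∈ range c, 2 ^ e i) = (List.range c).map e := by
  have hL : ((List.range c).map e).SortedGT := by
    refine (List.pairwise_map.2 <| List.pairwise_lt_range.imp_of_mem ?_).sortedGT
    intro i j _ hj hij
    exact he (hij.trans (List.mem_range.1 hj)) (List.mem_range.1 hj) hij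
  rw [← binExps_sum_map_two_pow hL, List.map_map]
  rfl

theorem eta_of_lt {N j : ℕ} (hj : j < pbin N) : eta N j = (2 : ℝ) ^ (binExps N)[j] / N := by
  simp only [eta, List.getD_eq_getElem?_getD, List.getElem?_map,
    List.getElem?_eq_getElem (show j < (binExps N).length from hj)]
  rfl

theorem eta_of_le {N j : ℕ} (hj : pbin N ≤ j) : eta N j = 0 := by
  simp [eta, List.getElem?_eq_none (show (binExps N).length ≤ j from hj)]

theorem eta_nonneg (N j : ℕ) : 0 ≤ eta N j := by
  rcases lt_or_ge j (pbin N) with hj | hj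
  · rw [eta_of_lt hj]
    positivity
  · rw [eta_of_le hj]

theorem hasSum_eta {N : ℕ} (hN : N ≠ 0) : HasSum (eta N) 1 := by
  have hsum : ((binExps N).map fun n => (2 : ℝ) ^ n).sum = N := by
    simpa [Nat.cast_list_sum, List.map_map, Function.comp_def] using
      congrArg (Nat.cast (R := ℝ)) (sum_map_two_pow_binExps N)
  have hsum' : ((binExps N).map fun n => (2 : ℝ) ^ n / N).sum = 1 := by
    simp only [div_eq_mul_inv, List.sum_map_mul_right, hsum]
    exact mul_inv_cancel₀ (Nat.cast_ne_zero.2 hN)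
  exact hsum' ▸ List.hasSum_getD _

theorem two_mul_eta_succ_le (N j : ℕ) : 2 * eta N (j + 1) ≤ eta N j := by
  rcases lt_or_ge (j + 1) (pbin N) with hj | hj
  · rw [eta_of_lt hj, eta_of_lt (j.lt_succ_self.trans hj), ← mul_div_assoc, ← pow_succ']
    gcongr
    · norm_num
    · exact (binExps_sortedGT N).getElem_lt_getElem_iff.2 j.lt_succ_self
  · rw [eta_of_le hj, mul_zero]
    exact eta_nonneg N j

theorem eta_le_half_pow {N : ℕ} (hN : N ≠ 0) (j : ℕ) : eta N j ≤ (1 / 2) ^ j := by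
  have h0 : eta N 0 ≤ 1 := le_hasSum (hasSum_eta hN) 0 fun i _ => eta_nonneg N i
  calc eta N j ≤ eta N 0 * (1 / 2) ^ j :=
        le_mul_half_pow_of_two_mul_succ_le (two_mul_eta_succ_le N) j
    _ ≤ (1 / 2) ^ j := mul_le_of_le_one_left (by positivity) h0

theorem eta_div_eta_zero_mem (N j : ℕ) :
    eta N j / eta N 0 ∈ insert 0 (Set.range fun t : ℕ => (1 / 2 : ℝ) ^ t) := by
  rcases lt_or_ge j (pbin N) with hj | hj
  · right
    have h0 : 0 < pbin N := j.zero_le.trans_lt hj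
    have hN : (N : ℝ) ≠ 0 := Nat.cast_ne_zero.2 (by rintro rfl; simp [pbin, binExps] at h0)
    obtain ⟨d, hd⟩ := Nat.exists_eq_add_of_le
      ((binExps_sortedGT N).getElem_le_getElem_iff.2 j.zero_le : (binExps N)[j] ≤ (binExps N)[0])
    refine ⟨d, ?_⟩
    rw [eta_of_lt hj, eta_of_lt h0, hd, div_div_div_cancel_right₀ hN, pow_add]
    field_simp
    rw [← mul_pow]
    norm_num
  · left
    rw [eta_of_le hj, zero_div]

theorem eta_sum_range_two_pow {c : ℕ} {e : ℕ → ℕ} (he : StrictAntiOn e (Set.Iio c)) (j : ℕ) :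
    eta (∑ i ∈ range c, 2 ^ e i) j =
      if j < c then 2 ^ e j / ((∑ i ∈ range c, 2 ^ e i : ℕ) : ℝ) else 0 := by
  have hp : pbin (∑ i ∈ range c, 2 ^ e i) = c := by
    rw [pbin, binExps_sum_range_two_pow he, List.length_map, List.length_range]
  split_ifs with hj
  · rw [eta_of_lt (by rwa [hp])]
    simp only [binExps_sum_range_two_pow he, List.getElem_map, List.getElem_range]
  · exact eta_of_le (by rw [hp]; exact not_lt.1 hj)

def dyadicTerm (ϑ : ℕ → ℝ) (k : ℕ → ℕ) (j : ℕ) : ℝ :=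
  if 0 < ϑ j then ((2 : ℝ) ^ k j)⁻¹ else 0

def IsDyadicProfile (ϑ : ℕ → ℝ) : Prop :=
  (1 / 2 ≤ ϑ 0 ∧ ϑ 0 ≤ 1) ∧
    ∃ k : ℕ → ℕ, k 0 = 0 ∧ StrictMonoOn k {j | 0 < ϑ j} ∧
      (∀ j, 0 < ϑ j → ϑ j = ϑ 0 / 2 ^ k j) ∧ 1 / ϑ 0 = ∑' j, dyadicTerm ϑ k j

theorem dyadicTerm_nonneg (ϑ : ℕ → ℝ) (k : ℕ → ℕ) (j : ℕ) : 0 ≤ dyadicTerm ϑ k j := by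
  unfold dyadicTerm
  split_ifs <;> positivity

theorem dyadicTerm_eq_div {ϑ : ℕ → ℝ} {k : ℕ → ℕ} (hnn : ∀ j, 0 ≤ ϑ j) (h0 : ϑ 0 ≠ 0)
    (hval : ∀ j, 0 < ϑ j → ϑ j = ϑ 0 / 2 ^ k j) (j : ℕ) : dyadicTerm ϑ k j = ϑ j / ϑ 0 := by
  unfold dyadicTerm
  split_ifs with hj
  · rw [hval j hj]
    field_simp
  · rw [le_antisymm (not_lt.1 hj) (hnn j), zero_div]

section Necessity

variable {ϑ : ℕ → ℝ}

theorem two_mul_succ_le_of_mem_Sset (hϑ : ϑ ∈ Sset) (j : ℕ) : 2 * ϑ (j + 1) ≤ ϑ j := by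
  obtain ⟨N, -, -, hN⟩ := hϑ
  exact le_of_tendsto_of_tendsto' ((hN (j + 1)).const_mul 2) (hN j) fun m => two_mul_eta_succ_le _ j

theorem hasSum_one_of_mem_Sset (hϑ : ϑ ∈ Sset) : HasSum ϑ 1 := by
  obtain ⟨N, -, hN1, hN⟩ := hϑ
  have hN0 : ∀ m, N m ≠ 0 := fun m => Nat.one_le_iff_ne_zero.1 (hN1 m)
  have hbound : ∀ m j, ‖eta (N m) j‖ ≤ (1 / 2) ^ j := fun m j => by
    rw [Real.norm_of_nonneg (eta_nonneg _ j)]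
    exact eta_le_half_pow (hN0 m) j
  have hsummable : Summable ϑ :=
    summable_geometric_two.of_norm_bounded fun j => le_of_tendsto' (hN j).norm fun m => hbound m j
  have hlim := tendsto_tsum_of_dominated_convergence summable_geometric_two hN
    (Eventually.of_forall hbound)
  simp only [fun m => (hasSum_eta (hN0 m)).tsum_eq] at hlim
  exact tendsto_nhds_unique tendsto_const_nhds hlim ▸ hsummable.hasSum

theorem div_mem_of_mem_Sset (hϑ : ϑ ∈ Sset) (h0 : ϑ 0 ≠ 0) (j : ℕ) :
    ϑ j / ϑ 0 ∈ insert 0 (Set.range fun t : ℕ => (1 / 2 : ℝ) ^ t) := by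
  obtain ⟨N, -, -, hN⟩ := hϑ
  exact isClosed_insert_zero_range_half_pow.mem_of_tendsto ((hN j).div (hN 0) h0)
    (Eventually.of_forall fun m => eta_div_eta_zero_mem _ j)

theorem isDyadicProfile_of_mem_Sset (hϑ : ϑ ∈ Sset) (hnn : ∀ j, 0 ≤ ϑ j)
    (hdec : ∀ j, ϑ (j + 1) ≤ ϑ j) : IsDyadicProfile ϑ := by
  have hsum := hasSum_one_of_mem_Sset hϑ
  have hhalf := two_mul_succ_le_of_mem_Sset hϑ
  have hle : ϑ 0 ≤ 1 := le_hasSum hsum 0 fun j _ => hnn j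
  -- `1 = Σ ϑ_j ≤ Σ ϑ_0 2^{-j} = 2 ϑ_0`
  have hge : 1 / 2 ≤ ϑ 0 := by
    have := hasSum_le (le_mul_half_pow_of_two_mul_succ_le hhalf) hsum
      (hasSum_geometric_two.mul_left (ϑ 0))
    linarith
  have h0 : 0 < ϑ 0 := by linarith
  have hk : ∀ j, ∃ t : ℕ, 0 < ϑ j → ϑ j = ϑ 0 / 2 ^ t := fun j => by
    rcases div_mem_of_mem_Sset hϑ h0.ne' j with h | ⟨t, ht⟩
    · exact ⟨0, fun hj => absurd h (div_pos hj h0).ne'⟩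
    · refine ⟨t, fun _ => ?_⟩
      rw [eq_div_iff h0.ne'] at ht
      rw [← ht]
      field_simp
      simp
  choose k hk using hk
  refine ⟨⟨hge, hle⟩, k, ?_, fun i hi j hj hij => ?_, hk, ?_⟩
  · have h := hk 0 h0
    rw [eq_div_iff (by positivity), mul_eq_left₀ h0.ne'] at h
    exact pow_right_injective₀ two_pos (by norm_num) (h.trans (pow_zero 2).symm)
  · have hlt : ϑ j < ϑ i := calc
      ϑ j ≤ ϑ (i + 1) := antitone_nat_of_succ_le hdec hij
      _ < ϑ i := by linarith [hhalf i, show 0 < ϑ i from hi]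
    rw [hk i hi, hk j hj, div_lt_div_iff_of_pos_left h0 (by positivity) (by positivity)] at hlt
    exact (pow_lt_pow_iff_right₀ one_lt_two).1 hlt
  · rw [tsum_congr (dyadicTerm_eq_div hnn h0.ne' hk), tsum_div_const, hsum.tsum_eq]

end Necessity

section Sufficiency

variable {ϑ : ℕ → ℝ} {k : ℕ → ℕ} {m c T : ℕ}

theorem exists_lt_iff_pos_and_le (hϑ : Antitone ϑ) (m : ℕ) :
    ∃ c, ∀ j, j < c ↔ 0 < ϑ j ∧ j ≤ m := by
  refine ⟨Nat.find (⟨m + 1, by omega⟩ : ∃ j, ¬(0 < ϑ j ∧ j ≤ m)), fun j => ?_⟩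
  simp only [Nat.lt_find_iff, not_not]
  exact ⟨fun h => h j le_rfl, fun ⟨hj, hjm⟩ i hij => ⟨hj.trans_le (hϑ hij), hij.trans hjm⟩⟩

theorem cast_sum_two_pow_sub (hc : ∀ j, j < c ↔ 0 < ϑ j ∧ j ≤ m) (hT : ∀ j ≤ m, k j ≤ T) :
    ((∑ j ∈ range c, 2 ^ (T - k j) : ℕ) : ℝ) =
      2 ^ T * ∑ j ∈ range (m + 1), dyadicTerm ϑ k j := by
  rw [Finset.mul_sum]
  push_cast
  refine (Finset.sum_congr rfl fun j hj => ?_).trans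
    (Finset.sum_subset (fun j hj => ?_) fun j hjm hjc => ?_)
  · obtain ⟨hpos, hjm⟩ := (hc j).1 (Finset.mem_range.1 hj)
    rw [dyadicTerm, if_pos hpos, pow_sub₀ _ two_ne_zero (hT j hjm)]
  · exact Finset.mem_range.2 (Nat.lt_succ_of_le ((hc j).1 (Finset.mem_range.1 hj)).2)
  · have hpos : ¬ 0 < ϑ j := fun hpos =>
      hjc (Finset.mem_range.2 ((hc j).2 ⟨hpos, Nat.lt_succ_iff.1 (Finset.mem_range.1 hjm)⟩))
    rw [dyadicTerm, if_neg hpos, mul_zero]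

theorem eta_sum_two_pow_sub (hk : StrictMonoOn k {j | 0 < ϑ j})
    (hc : ∀ j, j < c ↔ 0 < ϑ j ∧ j ≤ m) (hT : ∀ j ≤ m, k j ≤ T) {j : ℕ} (hj : j ≤ m) :
    eta (∑ j ∈ range c, 2 ^ (T - k j)) j =
      dyadicTerm ϑ k j / ∑ j ∈ range (m + 1), dyadicTerm ϑ k j := by
  have he : StrictAntiOn (fun j => T - k j) (Set.Iio c) := fun i hi j hj hij => by
    have := hk ((hc i).1 hi).1 ((hc j).1 hj).1 hij
    have := hT j ((hc j).1 hj).2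
    dsimp only
    omega
  rw [eta_sum_range_two_pow he, cast_sum_two_pow_sub hc hT]
  split_ifs with hjc
  · obtain ⟨hpos, hjm⟩ := (hc j).1 hjc
    rw [dyadicTerm, if_pos hpos, pow_sub₀ _ two_ne_zero (hT j hjm),
      mul_div_mul_left _ _ (by positivity)]
  · rw [dyadicTerm, if_neg fun hpos => hjc ((hc j).2 ⟨hpos, hj⟩), zero_div]

theorem tendsto_sum_range_dyadicTerm (h0 : ϑ 0 ≠ 0) (hsum : 1 / ϑ 0 = ∑' j, dyadicTerm ϑ k j) :
    Tendsto (fun m => ∑ j ∈ range (m + 1), dyadicTerm ϑ k j) atTop (𝓝 (1 / ϑ 0)) := by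
  have hsummable : Summable (dyadicTerm ϑ k) := by
    by_contra h
    rw [tsum_eq_zero_of_not_summable h] at hsum
    exact one_div_ne_zero h0 hsum
  rw [hsum]
  exact hsummable.hasSum.tendsto_sum_nat.comp (tendsto_add_atTop_nat 1)

theorem mem_Sset_of_isDyadicProfile (hnn : ∀ j, 0 ≤ ϑ j)
    (hdec : ∀ j, ϑ (j + 1) ≤ ϑ j) (hϑ : IsDyadicProfile ϑ) : ϑ ∈ Sset := by
  obtain ⟨⟨hge, -⟩, k, hk0, hk, hval, hsum⟩ := hϑ
  have h0 : 0 < ϑ 0 := by linarith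
  set S : ℕ → ℝ := fun m => ∑ j ∈ range (m + 1), dyadicTerm ϑ k j with hS_def
  have hS_pos : ∀ m, 0 < S m := fun m => by
    refine Finset.sum_pos' (fun j _ => dyadicTerm_nonneg ϑ k j) ⟨0, by simp, ?_⟩
    simp [dyadicTerm, h0, hk0]
  choose c hc using exists_lt_iff_pos_and_le (antitone_nat_of_succ_le hdec)
  set T : ℕ → ℕ := fun m => m + ∑ i ∈ range (m + 1), k i with hT_def
  have hkT : ∀ m, ∀ j ≤ m, k j ≤ T m := fun m j hj =>
    (Finset.single_le_sum (fun i _ => Nat.zero_le (k i))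
      (Finset.mem_range.2 (Nat.lt_succ_of_le hj))).trans (Nat.le_add_left _ _)
  have hT : StrictMono T := strictMono_nat_of_lt_succ fun m => by
    simp only [hT_def, Finset.sum_range_succ _ (m + 1)]
    omega
  set N : ℕ → ℕ := fun m => ∑ j ∈ range (c m), 2 ^ (T m - k j)
  have hN : ∀ m, (N m : ℝ) = 2 ^ T m * S m := fun m => cast_sum_two_pow_sub (hc m) (hkT m)
  refine ⟨N, strictMono_nat_of_lt_succ fun m => ?_, fun m => ?_, fun j => ?_⟩
  · rw [← Nat.cast_lt (α := ℝ), hN, hN]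
    calc 2 ^ T m * S m < 2 ^ T (m + 1) * S m := by
          gcongr
          · exact hS_pos m
          · norm_num
          · exact hT (Nat.lt_succ_self m)
      _ ≤ 2 ^ T (m + 1) * S (m + 1) := by
          gcongr
          simp only [hS_def, Finset.sum_range_succ _ (m + 1)]
          linarith [dyadicTerm_nonneg ϑ k (m + 1)]
  · exact_mod_cast (hN m ▸ mul_pos (by positivity) (hS_pos m) : (0 : ℝ) < N m)
  · have hlim : ϑ j = dyadicTerm ϑ k j / (1 / ϑ 0) := by
      rw [dyadicTerm_eq_div hnn h0.ne' hval]
      field_simp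
    rw [hlim]
    refine (tendsto_const_nhds.div (tendsto_sum_range_dyadicTerm h0.ne' hsum)
      (one_div_ne_zero h0.ne')).congr' ?_
    filter_upwards [eventually_ge_atTop j] with m hm
    exact (eta_sum_two_pow_sub hk (hc m) (hkT m) hm).symm

end Sufficiency

theorem stmt13 (ϑ : ℕ → ℝ) (hnn : ∀ j, 0 ≤ ϑ j) (hdec : ∀ j, ϑ (j + 1) ≤ ϑ j) :
    ϑ ∈ Sset ↔
      ((1 / 2 ≤ ϑ 0 ∧ ϑ 0 ≤ 1) ∧
        ∃ k : ℕ → ℕ, k 0 = 0 ∧ StrictMonoOn k {j | 0 < ϑ j} ∧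
          (∀ j, 0 < ϑ j → ϑ j = ϑ 0 / 2 ^ k j) ∧
          1 / ϑ 0 = ∑' j : ℕ, (if 0 < ϑ j then ((2 : ℝ) ^ k j)⁻¹ else 0)) :=
  ⟨fun hϑ => isDyadicProfile_of_mem_Sset hϑ hnn hdec, mem_Sset_of_isDyadicProfile hnn hdec⟩

end GreedyEnergy
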